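/- Let π be a finite group and L a non-degenerate π-algebra. For α, β ∈ π, a ∈ L_α, and b_β = Σᵢ pᵢ ⊗ qᵢ ∈ L_β ⊗ L_{β⁻¹} the canonical copairing, we have (a ⊗ 1)·b_β = b_{αβ}·(1 ⊗ a) in L ⊗ L, i.e., Σᵢ a·pᵢ^β ⊗ qᵢ^β = Σⱼ pⱼ^{αβ} ⊗ qⱼ^{αβ}·a. Consequently b = Σ_{α∈π} b_α is a separating idempotent, so L is a separable K-algebra. -/

import Mathlib

open scoped TensorProduct

/-!
For any functional `η` with `η (x * y) = η (y * x)` for which the `pᵢ^α`, `qᵢ^α` are dual bases,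
expanding `a pᵢ^β` in the dual basis of `L_{αβ}` and `qⱼ^{αβ} a` in that of `L_{β⁻¹}` writes both
sides of `(a ⊗ 1) b_β = b_{αβ} (1 ⊗ a)` as `∑ᵢⱼ η(a pᵢ^β qⱼ^{αβ}) pⱼ^{αβ} ⊗ qᵢ^β`. Summing over `β`
and then over the homogeneous components of `a` gives `(a ⊗ 1) b = b (1 ⊗ a)`.

For `e = ∑ pᵢ^α qᵢ^α`, the image of `b` under multiplication: the functionals
`x ↦ η(x_α qᵢ^α)` and the vectors `pᵢ^α` form a dual basis of all of `L`, so for `y ∈ L_1`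
the trace of `μ_y` is `∑ η(y pᵢ^α qᵢ^α) = η(y e)`. As `e ∈ L_1`, its coordinates in the dual
basis of `L_1` are then those of `1`, so `e = 1`.
-/

structure GradedPiAlgebra (K : Type*) [CommRing K] (A : Type*) [Ring A] [Algebra K A]
    (G : Type*) [Group G] [DecidableEq G] where
  comp : G → Submodule K A
  one_mem : (1 : A) ∈ comp 1
  mul_mem : ∀ {α β : G} {a b : A}, a ∈ comp α → b ∈ comp β → a * b ∈ comp (α * β)
  internal : DirectSum.IsInternal comp
  projective : ∀ α : G, Module.Projective K (comp α)
  finite : ∀ α : G, Module.Finite K (comp α)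


section

variable {K A : Type*} [CommRing K] [Ring A] [Algebra K A]

variable (K A) in
noncomputable def leftMulTrace : A →ₗ[K] K :=
  LinearMap.trace K A ∘ₗ LinearMap.mul K A

theorem leftMulTrace_apply (x : A) :
    leftMulTrace K A x = LinearMap.trace K A (LinearMap.mulLeft K x) :=
  rfl

theorem leftMulTrace_mul_comm (x y : A) :
    leftMulTrace K A (x * y) = leftMulTrace K A (y * x) := by
  simp only [leftMulTrace_apply, LinearMap.mulLeft_mul]
  exact LinearMap.trace_mul_comm K _ _

theorem leftMulTrace_eq_zero_of_not_exists_basis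
    (h : ¬∃ s : Finset A, Nonempty (Module.Basis s K A)) : leftMulTrace K A = 0 := by
  classical
  rw [leftMulTrace, LinearMap.trace, dif_neg h, LinearMap.zero_comp]

theorem sum_mul_tmul_eq_sum_tmul_mul {ι κ : Type*} [Fintype ι] [Fintype κ]
    (η : A →ₗ[K] K) (hη : ∀ x y, η (x * y) = η (y * x))
    (p q : ι → A) (p' q' : κ → A) (a : A)
    (hp' : ∀ i, ∑ j, η (a * p i * q' j) • p' j = a * p i)
    (hq : ∀ j, ∑ i, η (p i * (q' j * a)) • q i = q' j * a) :
    ∑ i, (a * p i) ⊗ₜ[K] q i = ∑ j, p' j ⊗ₜ[K] (q' j * a) := by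
  have hcoef : ∀ i j, η (a * p i * q' j) = η (p i * (q' j * a)) := fun i j => by
    rw [mul_assoc, hη, mul_assoc]
  calc ∑ i, (a * p i) ⊗ₜ[K] q i
      = ∑ i, ∑ j, η (a * p i * q' j) • p' j ⊗ₜ[K] q i := by
        refine Finset.sum_congr rfl fun i _ => ?_
        conv_lhs => rw [← hp' i, TensorProduct.sum_tmul]
        simp_rw [TensorProduct.smul_tmul']
    _ = ∑ j, ∑ i, η (p i * (q' j * a)) • p' j ⊗ₜ[K] q i := by
        rw [Finset.sum_comm]
        exact Finset.sum_congr rfl fun j _ => Finset.sum_congr rfl fun i _ => by rw [hcoef]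
    _ = ∑ j, p' j ⊗ₜ[K] (q' j * a) := by
        refine Finset.sum_congr rfl fun j _ => ?_
        conv_rhs => rw [← hq j, TensorProduct.tmul_sum]
        simp_rw [TensorProduct.tmul_smul]

end

theorem LinearMap.trace_eq_sum_apply_of_sum_smul_eq {K M ι : Type*} [CommRing K]
    [AddCommGroup M] [Module K M] [Module.Free K M] [Module.Finite K M] [Fintype ι]
    (φ : ι → Module.Dual K M) (v : ι → M) (hv : ∀ x, ∑ i, φ i x • v i = x)
    (f : Module.End K M) : LinearMap.trace K M f = ∑ i, φ i (f (v i)) := by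
  have hf : f = ∑ i, dualTensorHom K M M (φ i ⊗ₜ f (v i)) := by
    ext x
    conv_lhs => rw [← hv x]
    simp [dualTensorHom_apply]
  conv_lhs => rw [hf, map_sum]
  exact Finset.sum_congr rfl fun i _ => by
    rw [LinearMap.trace_eq_contract_apply, contractLeft_apply]

namespace DirectSum.IsInternal

variable {K M ι : Type*} [CommRing K] [AddCommGroup M] [Module K M] [DecidableEq ι]
  {N : ι → Submodule K M} (h : IsInternal N)

noncomputable def proj (i : ι) : M →ₗ[K] M :=
  (N i).subtype ∘ₗ component K ι (fun i => N i) i ∘ₗ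
    (LinearEquiv.ofBijective (coeLinearMap N) h).symm.toLinearMap

theorem proj_mem (i : ι) (x : M) : h.proj i x ∈ N i :=
  Submodule.coe_mem _

theorem proj_of_mem {i : ι} {x : M} (hx : x ∈ N i) : h.proj i x = x :=
  congrArg Subtype.val (h.ofBijective_coeLinearMap_of_mem hx)

theorem sum_proj [Fintype ι] (x : M) : ∑ i, h.proj i x = x := by
  set e := LinearEquiv.ofBijective (coeLinearMap N) h
  calc ∑ i, h.proj i x = coeLinearMap N (∑ i, of (fun i => N i) i (e.symm x i)) := by
        simp only [map_sum, coeLinearMap_of]; rfl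
    _ = x := by rw [sum_univ_of]; exact e.apply_symm_apply x

theorem sum_sum_smul_proj_eq [Fintype ι] {κ : ι → Type*} [∀ i, Fintype (κ i)]
    (φ : ∀ i, κ i → Module.Dual K M) (v : ∀ i, κ i → M)
    (hv : ∀ i, ∀ x ∈ N i, ∑ j, φ i j x • v i j = x) (x : M) :
    ∑ i, ∑ j, φ i j (h.proj i x) • v i j = x := by
  conv_rhs => rw [← h.sum_proj x]
  exact Finset.sum_congr rfl fun i _ => hv i _ (h.proj_mem i x)

end DirectSum.IsInternal

namespace GradedPiAlgebra

variable {K A G : Type*} [CommRing K] [Ring A] [Algebra K A] [Group G] [DecidableEq G]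
  (S : GradedPiAlgebra K A G) {n : G → ℕ} {p q : ∀ α : G, Fin (n α) → A}

theorem sum_mul_tmul_eq_sum_tmul_mul_of_mem (η : A →ₗ[K] K) (hη : ∀ x y, η (x * y) = η (y * x))
    (hp : ∀ α i, p α i ∈ S.comp α) (hq : ∀ α i, q α i ∈ S.comp α⁻¹)
    (hrepP : ∀ α, ∀ a ∈ S.comp α, a = ∑ i, η (a * q α i) • p α i)
    (hrepQ : ∀ α, ∀ b ∈ S.comp α⁻¹, b = ∑ i, η (p α i * b) • q α i)
    {α β : G} {a : A} (ha : a ∈ S.comp α) :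
    ∑ i, (a * p β i) ⊗ₜ[K] q β i = ∑ j, p (α * β) j ⊗ₜ[K] (q (α * β) j * a) := by
  refine sum_mul_tmul_eq_sum_tmul_mul η hη _ _ _ _ a
    (fun i => (hrepP _ _ (S.mul_mem ha (hp β i))).symm) (fun j => (hrepQ _ _ ?_).symm)
  simpa [mul_assoc] using S.mul_mem (hq (α * β) j) ha

theorem tmul_one_mul_eq_mul_one_tmul [Fintype G] (η : A →ₗ[K] K)
    (hη : ∀ x y, η (x * y) = η (y * x))
    (hp : ∀ α i, p α i ∈ S.comp α) (hq : ∀ α i, q α i ∈ S.comp α⁻¹)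
    (hrepP : ∀ α, ∀ a ∈ S.comp α, a = ∑ i, η (a * q α i) • p α i)
    (hrepQ : ∀ α, ∀ b ∈ S.comp α⁻¹, b = ∑ i, η (p α i * b) • q α i) (a : A) :
    (a ⊗ₜ[K] 1) * ∑ α, ∑ i, p α i ⊗ₜ[K] q α i = (∑ α, ∑ i, p α i ⊗ₜ[K] q α i) * (1 ⊗ₜ[K] a) := by
  rw [← S.internal.sum_proj a, TensorProduct.sum_tmul, TensorProduct.tmul_sum, Finset.sum_mul,
    Finset.mul_sum]
  refine Finset.sum_congr rfl fun α _ => ?_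
  simp only [Finset.mul_sum, Finset.sum_mul, Algebra.TensorProduct.tmul_mul_tmul, one_mul,
    mul_one]
  refine (Finset.sum_congr rfl fun β _ => ?_).trans
    (Fintype.sum_equiv (Equiv.mulLeft α) _ (fun γ => ∑ j, p γ j ⊗ₜ[K] (q γ j * _)) fun _ => rfl)
  exact S.sum_mul_tmul_eq_sum_tmul_mul_of_mem η hη hp hq hrepP hrepQ (S.internal.proj_mem α a)

theorem leftMulTrace_eq_sum_of_mem_one [Fintype G] [Module.Free K A] [Module.Finite K A]
    (hp : ∀ α i, p α i ∈ S.comp α)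
    (hrepP : ∀ α, ∀ a ∈ S.comp α, a = ∑ i, leftMulTrace K A (a * q α i) • p α i)
    {y : A} (hy : y ∈ S.comp 1) :
    leftMulTrace K A y = ∑ α, ∑ i, leftMulTrace K A (y * p α i * q α i) := by
  let ψ (α : G) (i : Fin (n α)) : Module.Dual K A :=
    leftMulTrace K A ∘ₗ LinearMap.mulRight K (q α i)
  have hcoord (x : A) :
      ∑ k : Σ α, Fin (n α), (ψ k.1 k.2 ∘ₗ S.internal.proj k.1) x • p k.1 k.2 = x := by
    rw [Fintype.sum_sigma]
    exact S.internal.sum_sum_smul_proj_eq ψ p (fun α a ha => (hrepP α a ha).symm) x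
  rw [leftMulTrace_apply, LinearMap.trace_eq_sum_apply_of_sum_smul_eq _ _ hcoord,
    Fintype.sum_sigma]
  refine Finset.sum_congr rfl fun α _ => Finset.sum_congr rfl fun i _ => ?_
  have hyp : y * p α i ∈ S.comp α := by simpa using S.mul_mem hy (hp α i)
  simp [ψ, S.internal.proj_of_mem hyp]

theorem sum_mul_eq_one [Fintype G] (hp : ∀ α i, p α i ∈ S.comp α)
    (hq : ∀ α i, q α i ∈ S.comp α⁻¹)
    (hrepP : ∀ α, ∀ a ∈ S.comp α, a = ∑ i, leftMulTrace K A (a * q α i) • p α i) :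
    ∑ α, ∑ i, p α i * q α i = 1 := by
  by_cases hfree : ∃ s : Finset A, Nonempty (Module.Basis s K A)
  swap
  · -- Mathlib's trace vanishes on modules without a finite basis, so `hrepP` collapses `L`.
    have hone : (1 : A) = 0 := by
      simpa [leftMulTrace_eq_zero_of_not_exists_basis hfree] using hrepP 1 1 S.one_mem
    exact (subsingleton_of_zero_eq_one hone.symm).elim _ _
  obtain ⟨s, ⟨b⟩⟩ := hfree
  have := Module.Free.of_basis b
  have := Module.Finite.of_basis b
  set e := ∑ α, ∑ i, p α i * q α i
  have he : e ∈ S.comp 1 := Submodule.sum_mem _ fun α _ => Submodule.sum_mem _ fun i _ => by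
    simpa using S.mul_mem (hp α i) (hq α i)
  have hq1 (i : Fin (n 1)) : q 1 i ∈ S.comp 1 := by simpa using hq 1 i
  have hcoef (i : Fin (n 1)) : leftMulTrace K A (e * q 1 i) = leftMulTrace K A (q 1 i) := by
    rw [leftMulTrace_mul_comm, S.leftMulTrace_eq_sum_of_mem_one hp hrepP (hq1 i)]
    simp only [e, Finset.mul_sum, map_sum, mul_assoc]
  calc e = ∑ i, leftMulTrace K A (e * q 1 i) • p 1 i := hrepP 1 e he
    _ = ∑ i, leftMulTrace K A (1 * q 1 i) • p 1 i := by simp_rw [hcoef, one_mul]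
    _ = 1 := (hrepP 1 1 S.one_mem).symm

end GradedPiAlgebra

theorem nondegenerate_separating_idempotent_general {K : Type*} [CommRing K]
    {A : Type*} [Ring A] [Algebra K A] {G : Type*} [Group G] [DecidableEq G] [Fintype G]
    (S : GradedPiAlgebra K A G)
    (n : G → ℕ) (p q : ∀ α : G, Fin (n α) → A)
    (hp : ∀ (α : G) (i : Fin (n α)), p α i ∈ S.comp α)
    (hq : ∀ (α : G) (i : Fin (n α)), q α i ∈ S.comp α⁻¹)
    (hrepP : ∀ (α : G), ∀ a ∈ S.comp α,
      a = ∑ i, LinearMap.trace K A (LinearMap.mulLeft K (a * q α i)) • p α i)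
    (hrepQ : ∀ (α : G), ∀ b ∈ S.comp α⁻¹,
      b = ∑ i, LinearMap.trace K A (LinearMap.mulLeft K (p α i * b)) • q α i) :
    (∀ (α β : G) (a : A), a ∈ S.comp α →
        ∑ i, (a * p β i) ⊗ₜ[K] q β i =
          ∑ j, p (α * β) j ⊗ₜ[K] (q (α * β) j * a)) ∧
    (LinearMap.mul' K A (∑ α : G, ∑ i, p α i ⊗ₜ[K] q α i) = 1) ∧
    (∀ a : A,
      (a ⊗ₜ[K] (1 : A)) * (∑ α : G, ∑ i, p α i ⊗ₜ[K] q α i) =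
        (∑ α : G, ∑ i, p α i ⊗ₜ[K] q α i) * ((1 : A) ⊗ₜ[K] a)) := by
  refine ⟨fun α β a ha => S.sum_mul_tmul_eq_sum_tmul_mul_of_mem (leftMulTrace K A)
    leftMulTrace_mul_comm hp hq hrepP hrepQ ha, ?_, S.tmul_one_mul_eq_mul_one_tmul
    (leftMulTrace K A) leftMulTrace_mul_comm hp hq hrepP hrepQ⟩
  simp only [map_sum, LinearMap.mul'_apply]
  exact S.sum_mul_eq_one hp hq hrepP

/-- Let `π` be a finite group and `L` a non-degenerate `π`-algebra.
For `α, β ∈ π`, `a ∈ L_α`, and the canonical copairings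
`b_β = Σᵢ pᵢ^β ⊗ qᵢ^β ∈ L_β ⊗ L_{β⁻¹}`, one has `(a ⊗ 1)·b_β = b_{αβ}·(1 ⊗ a)` in
`L ⊗ L`, i.e., `Σᵢ a·pᵢ^β ⊗ qᵢ^β = Σⱼ pⱼ^{αβ} ⊗ qⱼ^{αβ}·a`. Consequently
`b = Σ_{α∈π} b_α` is a separating idempotent: multiplication sends `b` to `1` and
`(a ⊗ 1)·b = b·(1 ⊗ a)` for all `a ∈ L`; hence `L` is a separable `K`-algebra. -/
theorem nondegenerate_separating_idempotent {K : Type*} [CommRing K]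
    {A : Type*} [Ring A] [Algebra K A] {G : Type*} [Group G] [DecidableEq G] [Fintype G]
    (S : GradedPiAlgebra K A G)
    (hnd : ∃ B : A →ₗ[K] A →ₗ[K] K,
      (∀ x y : A, B x y = LinearMap.trace K A (LinearMap.mulLeft K (x * y))) ∧
      Function.Bijective B ∧ Function.Bijective B.flip)
    (n : G → ℕ) (p q : ∀ α : G, Fin (n α) → A)
    (hp : ∀ (α : G) (i : Fin (n α)), p α i ∈ S.comp α)
    (hq : ∀ (α : G) (i : Fin (n α)), q α i ∈ S.comp α⁻¹)
    (hrepP : ∀ (α : G), ∀ a ∈ S.comp α,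
      a = ∑ i, LinearMap.trace K A (LinearMap.mulLeft K (a * q α i)) • p α i)
    (hrepQ : ∀ (α : G), ∀ b ∈ S.comp α⁻¹,
      b = ∑ i, LinearMap.trace K A (LinearMap.mulLeft K (p α i * b)) • q α i) :
    (∀ (α β : G) (a : A), a ∈ S.comp α →
        ∑ i, (a * p β i) ⊗ₜ[K] q β i =
          ∑ j, p (α * β) j ⊗ₜ[K] (q (α * β) j * a)) ∧
    (LinearMap.mul' K A (∑ α : G, ∑ i, p α i ⊗ₜ[K] q α i) = 1) ∧
    (∀ a : A,
      (a ⊗ₜ[K] (1 : A)) * (∑ α : G, ∑ i, p α i ⊗ₜ[K] q α i) =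
        (∑ α : G, ∑ i, p α i ⊗ₜ[K] q α i) * ((1 : A) ⊗ₜ[K] a)) :=
  nondegenerate_separating_idempotent_general S n p q hp hq hrepP hrepQ
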